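/- Let n be an even positive integer, p a natural number, Δs = 2π/n, and s_j = −π + j·Δs for j ∈ ℤ. Let q = binom(2p, p), let σ(η) = 2^{2p}·η·sin^{2p}(πη/2)/q, let sinc(x) = sin(x)/x for x ≠ 0 with sinc(0) = 1, and let sgn(k) ∈ {−1, 0, 1} be the sign of k. Let f : ℤ → ℂ be n-periodic (f(j + n) = f(j) for all j), and define the discrete Fourier coefficients f̂_k = (1/n)·∑_{j=0}^{n−1} f(j)·e^{−i k s_j} for k ∈ ℤ. Then for every j ∈ ℤ, π·i·∑_{k=−n/2}^{n/2−1} sgn(k)·σ(|k|Δs/π)·sinc(|k|Δs/2)·f̂_k·e^{i k (s_j + Δs/2)} = (1/q)·∑_{l=0}^{p} (−1)^l·binom(2p+1, p−l)·( f(j+1+l) − f(j−l) ). -/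

import Mathlib

/-!
Up to the factor `1/q`, the multiplier `π i sgn(k) σ(|k|Δs/π) sinc(|k|Δs/2)` equals
`i (2 sin θ)^(2p+1)` with `θ = kΔs/2`, and `2i sin θ = e^{iθ} - e^{-iθ}`. Multiplied by the
half-cell shift `e^{iθ}`, the binomial expansion of `(e^{iθ} - e^{-iθ})^(2p+1)` becomes a
combination of whole-cell shifts `e^{ikdΔs}` whose coefficients are exactly those of `Δ^(2p+1)`.
Discrete Fourier inversion, valid over any `n` consecutive frequencies, turns each shifted
frequency sum back into a value `f (j + d)`.
-/

open Real Finset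

theorem sum_Icc_eq_sum_range_add {M : Type*} [AddCommMonoid M] (g : ℤ → M) (a : ℤ) (n : ℕ) :
    ∑ k ∈ Icc a (a + n - 1), g k = ∑ i ∈ range n, g (a + i) := by
  symm
  refine sum_nbij (fun i : ℕ => a + i) ?_ ?_ ?_ fun _ _ => rfl
  · intro i hi
    rw [mem_range] at hi
    rw [mem_Icc]
    omega
  · intro i _ i' _ h
    simpa using h
  · intro k hk
    rw [coe_Icc, Set.mem_Icc] at hk
    exact ⟨(k - a).toNat, by rw [coe_range, Set.mem_Iio]; omega, by dsimp only; omega⟩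

theorem sum_Icc_zpow_eq_ite {K : Type*} [Field K] [DecidableEq K] {z : K} {n : ℕ} (hn : 0 < n)
    (hz : z ^ n = 1) (a : ℤ) :
    ∑ k ∈ Icc a (a + n - 1), z ^ k = if z = 1 then (n : K) else 0 := by
  have hz0 : z ≠ 0 := by
    rintro rfl
    simp [zero_pow hn.ne'] at hz
  simp_rw [sum_Icc_eq_sum_range_add, zpow_add₀ hz0, zpow_natCast, ← mul_sum]
  split_ifs with h
  · simp [h]
  · rw [geom_sum_eq h, hz, sub_self, zero_div, mul_zero]

theorem sum_Icc_exp_mul_eq_ite {n : ℕ} (hn : 0 < n) (a m : ℤ) :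
    ∑ k ∈ Icc a (a + n - 1), Complex.exp (Complex.I * k * (m * (2 * π / n))) =
      if (n : ℤ) ∣ m then (n : ℂ) else 0 := by
  have hζ := Complex.isPrimitiveRoot_exp n hn.ne'
  set ζ := Complex.exp (2 * π * Complex.I / n)
  have hterm : ∀ k : ℤ, Complex.exp (Complex.I * k * (m * (2 * π / n))) = (ζ ^ m) ^ k := by
    intro k
    rw [← zpow_mul, ← Complex.exp_int_mul]
    congr 1
    push_cast
    ring
  have hroot : (ζ ^ m) ^ n = 1 := by
    rw [← zpow_natCast, ← zpow_mul, hζ.zpow_eq_one_iff_dvd]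
    exact dvd_mul_left _ _
  simp_rw [hterm, sum_Icc_zpow_eq_ite hn hroot, hζ.zpow_eq_one_iff_dvd]

theorem Function.Periodic.sum_range_ite_dvd_sub {M : Type*} [AddCommMonoid M] {f : ℤ → M}
    {n : ℕ} (hf : Function.Periodic f n) (hn : 0 < n) (r : ℤ) :
    ∑ j ∈ range n, (if (n : ℤ) ∣ r - j then f j else 0) = f r := by
  have hn' : (0 : ℤ) < n := by exact_mod_cast hn
  have hmod : ((r % n).toNat : ℤ) = r % n := Int.toNat_of_nonneg (Int.emod_nonneg r hn'.ne')
  have hlt : (r % n).toNat < n := by have := Int.emod_lt_of_pos r hn'; omega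
  rw [sum_eq_single_of_mem _ (mem_range.mpr hlt), if_pos, hmod]
  · rw [Int.emod_def, mul_comm]
    simpa using hf.sub_int_mul_eq (x := r) (r / n)
  · rw [hmod, Int.emod_def]
    simp
  · intro j hj hne
    rw [if_neg]
    intro hdvd
    have hj' : (j : ℤ) % n = r % n := Int.modEq_iff_dvd.mpr hdvd
    rw [Int.emod_eq_of_lt (by positivity) (by exact_mod_cast mem_range.mp hj)] at hj'
    omega

-- `c` is the offset of the grid `c + 2πj/n` (the paper's `-π`); it cancels in the inversion.
noncomputable def dftCoeff (n : ℕ) (c : ℝ) (f : ℤ → ℂ) (k : ℤ) : ℂ :=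
  1 / (n : ℂ) * ∑ j ∈ range n,
    f j * Complex.exp (-Complex.I * k * ((c + ((j : ℤ) : ℝ) * (2 * π / n) : ℝ) : ℂ))

theorem sum_Icc_dftCoeff_mul_exp {n : ℕ} (hn : 0 < n) {f : ℤ → ℂ}
    (hf : Function.Periodic f n) (c : ℝ) (a r : ℤ) :
    ∑ k ∈ Icc a (a + n - 1),
      dftCoeff n c f k * Complex.exp (Complex.I * k * ((c + r * (2 * π / n) : ℝ) : ℂ)) =
        f r := by
  have hmerge : ∀ (k : ℤ) (j : ℕ),
      Complex.exp (-Complex.I * k * ((c + ((j : ℤ) : ℝ) * (2 * π / n) : ℝ) : ℂ)) *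
        Complex.exp (Complex.I * k * ((c + r * (2 * π / n) : ℝ) : ℂ)) =
      Complex.exp (Complex.I * k * (((r - j : ℤ) : ℂ) * (2 * π / n))) := by
    intro k j
    rw [← Complex.exp_add]
    congr 1
    push_cast
    ring
  calc ∑ k ∈ Icc a (a + n - 1),
        dftCoeff n c f k * Complex.exp (Complex.I * k * ((c + r * (2 * π / n) : ℝ) : ℂ))
      = 1 / (n : ℂ) * ∑ j ∈ range n, f j *
          ∑ k ∈ Icc a (a + n - 1),
            Complex.exp (Complex.I * k * (((r - j : ℤ) : ℂ) * (2 * π / n))) := by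
        simp_rw [dftCoeff, mul_sum, sum_mul]
        rw [sum_comm]
        refine sum_congr rfl fun j _ => sum_congr rfl fun k _ => ?_
        rw [← hmerge]
        ring
    _ = 1 / (n : ℂ) * ∑ j ∈ range n, (if (n : ℤ) ∣ r - j then f j else 0) * n := by
        simp_rw [sum_Icc_exp_mul_eq_ite hn, mul_ite, ite_mul, mul_zero, zero_mul]
    _ = f r := by
        rw [← sum_mul, hf.sum_range_ite_dvd_sub hn]
        field_simp [hn.ne']

theorem neg_one_pow_mul_sub_one_pow_eq_sum {R : Type*} [CommRing R] (p : ℕ) (ζ : R) :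
    (-1) ^ p * (ζ - 1) ^ (2 * p + 1) =
      ∑ l ∈ range (p + 1),
        (-1) ^ l * ((2 * p + 1).choose (p - l) : R) * (ζ ^ (p + 1 + l) - ζ ^ (p - l)) := by
  rw [sub_pow, mul_sum, show 2 * p + 1 + 1 = (p + 1) + (p + 1) by ring, sum_range_add,
    ← sum_range_reflect, ← sum_add_distrib]
  refine sum_congr rfl fun l hl => ?_
  obtain ⟨t, rfl⟩ := Nat.exists_eq_add_of_le (Nat.lt_succ_iff.mp (mem_range.mp hl))
  have hchoose : (2 * (l + t) + 1).choose (l + t + 1 + l) = (2 * (l + t) + 1).choose t := by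
    rw [← Nat.choose_symm (by omega)]; congr 1; omega
  simp only [show l + t + 1 - 1 - l = t by omega, show l + t - l = t by omega, hchoose, one_pow,
    mul_one]
  ring_nf
  norm_num [pow_mul']

theorem I_mul_two_mul_sin_pow_mul_exp (p : ℕ) (θ : ℂ) :
    Complex.I * (2 * Complex.sin θ) ^ (2 * p + 1) * Complex.exp (θ * Complex.I) =
      ∑ l ∈ range (p + 1), (-1) ^ l * ((2 * p + 1).choose (p - l) : ℂ) *
        (Complex.exp (θ * Complex.I) ^ (2 * l + 2) -
          Complex.exp (-(θ * Complex.I)) ^ (2 * l)) := by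
  rw [Complex.exp_neg]
  set u := Complex.exp (θ * Complex.I)
  have hu : u ≠ 0 := Complex.exp_ne_zero _
  have hsin : 2 * Complex.sin θ * Complex.I = u - u⁻¹ := by
    rw [Complex.two_sin, neg_mul, Complex.exp_neg]
    linear_combination (u⁻¹ - u) * Complex.I_sq
  have hI : Complex.I ^ (2 * p + 1) = (-1) ^ p * Complex.I := by
    rw [pow_succ, pow_mul, Complex.I_sq]
  have hfactor : (u - u⁻¹) ^ (2 * p + 1) * u = u⁻¹ ^ (2 * p) * (u ^ 2 - 1) ^ (2 * p + 1) := by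
    rw [show u - u⁻¹ = u⁻¹ * (u ^ 2 - 1) by field_simp, mul_pow, pow_succ u⁻¹]
    field_simp
  calc Complex.I * (2 * Complex.sin θ) ^ (2 * p + 1) * u
      = (-1) ^ p * ((u - u⁻¹) ^ (2 * p + 1) * u) := by
        rw [← hsin, mul_pow _ Complex.I, hI]
        have hsq : ((-1 : ℂ) ^ p) * (-1) ^ p = 1 := by rw [← mul_pow]; norm_num
        linear_combination -(2 * Complex.sin θ) ^ (2 * p + 1) * u * Complex.I * hsq
  _ = u⁻¹ ^ (2 * p) * ((-1) ^ p * (u ^ 2 - 1) ^ (2 * p + 1)) := by rw [hfactor]; ring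
  _ = _ := by
        rw [neg_one_pow_mul_sub_one_pow_eq_sum, mul_sum]
        refine sum_congr rfl fun l hl => ?_
        obtain ⟨t, rfl⟩ := Nat.exists_eq_add_of_le (Nat.lt_succ_iff.mp (mem_range.mp hl))
        rw [show l + t - l = t by omega, inv_pow, inv_pow]
        field_simp
        ring

noncomputable def trigConcentrationFactor (p : ℕ) (η : ℝ) : ℝ :=
  2 ^ (2 * p) * η * Real.sin (π * η / 2) ^ (2 * p) / (Nat.choose (2 * p) p : ℝ)

theorem mul_sinc (x : ℝ) : x * sinc x = sin x := by
  by_cases hx : x = 0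
  · simp [hx]
  · rw [sinc_of_ne_zero hx, mul_div_cancel₀ _ hx]

theorem pi_mul_sign_mul_trigConcentrationFactor_mul_sinc (p : ℕ) (x : ℝ) (k : ℤ) :
    π * k.sign * trigConcentrationFactor p (|(k : ℝ)| * x / π) * sinc (|(k : ℝ)| * x / 2) =
      (2 * sin (k * x / 2)) ^ (2 * p + 1) / (2 * p).choose p := by
  have hodd :
      (k.sign : ℝ) * sin (|(k : ℝ)| * x / 2) ^ (2 * p + 1) = sin (k * x / 2) ^ (2 * p + 1) := by
    rcases lt_trichotomy k 0 with hk | rfl | hk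
    · rw [Int.sign_eq_neg_one_of_neg hk, abs_of_neg (Int.cast_lt_zero.mpr hk), neg_mul, neg_div,
        sin_neg, Odd.neg_pow ⟨p, rfl⟩]
      push_cast
      ring
    · simp
    · rw [Int.sign_eq_one_of_pos hk, abs_of_pos (Int.cast_pos.mpr hk)]
      push_cast
      ring
  set y := |(k : ℝ)| * x / 2
  have hη : |(k : ℝ)| * x / π = 2 * y / π := by ring
  have hy : π * (2 * y / π) / 2 = y := by field_simp
  rw [hη, trigConcentrationFactor, hy]
  calc π * k.sign * (2 ^ (2 * p) * (2 * y / π) * sin y ^ (2 * p) / (2 * p).choose p) * sinc y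
      = 2 ^ (2 * p + 1) * (k.sign * sin y ^ (2 * p) * (y * sinc y)) / (2 * p).choose p := by
        field_simp
        ring
    _ = _ := by
        rw [mul_sinc, mul_assoc _ (sin y ^ _), ← pow_succ, hodd, mul_pow]

theorem symbol_mul_exp_midpoint (p : ℕ) (c Δs : ℝ) (k j : ℤ) (a : ℂ) :
    (π : ℂ) * Complex.I *
      ((k.sign : ℂ) * (trigConcentrationFactor p (|(k : ℝ)| * Δs / π) : ℂ) *
        (sinc (|(k : ℝ)| * Δs / 2) : ℂ) * a *
          Complex.exp (Complex.I * k * ((c + j * Δs + Δs / 2 : ℝ) : ℂ))) =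
    1 / ((Nat.choose (2 * p) p : ℝ) : ℂ) * ∑ l ∈ range (p + 1),
      (-1 : ℂ) ^ l * (Nat.choose (2 * p + 1) (p - l) : ℂ) *
        (a * Complex.exp (Complex.I * k * ((c + ((j + 1 + l : ℤ) : ℝ) * Δs : ℝ) : ℂ)) -
          a * Complex.exp (Complex.I * k * ((c + ((j - l : ℤ) : ℝ) * Δs : ℝ) : ℂ))) := by
  set θ : ℂ := k * Δs / 2 with hθ
  set e := Complex.exp (Complex.I * k * ((c + j * Δs : ℝ) : ℂ))
  have hsymbol :=
    congrArg ((↑) : ℝ → ℂ) (pi_mul_sign_mul_trigConcentrationFactor_mul_sinc p Δs k)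
  push_cast at hsymbol
  have hmid : Complex.exp (Complex.I * k * ((c + j * Δs + Δs / 2 : ℝ) : ℂ)) =
      e * Complex.exp (θ * Complex.I) := by
    rw [← Complex.exp_add, hθ]
    congr 1
    push_cast
    ring
  have hright : ∀ l : ℕ, e * Complex.exp (θ * Complex.I) ^ (2 * l + 2) =
      Complex.exp (Complex.I * k * ((c + ((j + 1 + l : ℤ) : ℝ) * Δs : ℝ) : ℂ)) := by
    intro l
    rw [← Complex.exp_nat_mul, ← Complex.exp_add, hθ]
    congr 1
    push_cast
    ring
  have hleft : ∀ l : ℕ, e * Complex.exp (-(θ * Complex.I)) ^ (2 * l) =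
      Complex.exp (Complex.I * k * ((c + ((j - l : ℤ) : ℝ) * Δs : ℝ) : ℂ)) := by
    intro l
    rw [← Complex.exp_nat_mul, ← Complex.exp_add, hθ]
    congr 1
    push_cast
    ring
  calc _ = 1 / ((Nat.choose (2 * p) p : ℝ) : ℂ) * (a * e) *
        (Complex.I * (2 * Complex.sin θ) ^ (2 * p + 1) * Complex.exp (θ * Complex.I)) := by
        rw [hmid]
        push_cast
        linear_combination Complex.I * a * e * Complex.exp (θ * Complex.I) * hsymbol
    _ = _ := by
        rw [I_mul_two_mul_sin_pow_mul_exp, mul_sum, mul_sum]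
        refine sum_congr rfl fun l _ => ?_
        rw [← hright, ← hleft]
        ring

theorem stmt_9_general (n : ℕ) (hn : 0 < n) (p : ℕ)
    (f : ℤ → ℂ) (hper : ∀ j : ℤ, f (j + n) = f j) :
    let Δs : ℝ := 2 * π / n
    let s : ℤ → ℝ := fun j => -π + j * Δs
    let q : ℝ := Nat.choose (2 * p) p
    let σ : ℝ → ℝ := fun η => 2 ^ (2 * p) * η * Real.sin (π * η / 2) ^ (2 * p) / q
    let sinc : ℝ → ℝ := fun x => if x = 0 then 1 else Real.sin x / x
    let fhat : ℤ → ℂ := fun k =>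
      (1 / (n : ℂ)) * ∑ j ∈ Finset.range n, f j * Complex.exp (-Complex.I * k * (s j : ℂ))
    ∀ j : ℤ,
      (π : ℂ) * Complex.I *
          ∑ k ∈ Finset.Icc (-(n : ℤ) / 2) ((n : ℤ) / 2 - 1),
            (Int.sign k : ℂ) * ((σ ((|k| : ℝ) * Δs / π) : ℝ) : ℂ) *
              ((sinc ((|k| : ℝ) * Δs / 2) : ℝ) : ℂ) * fhat k *
              Complex.exp (Complex.I * k * ((s j + Δs / 2 : ℝ) : ℂ)) =
        (1 / (q : ℂ)) * ∑ l ∈ Finset.range (p + 1),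
            (-1 : ℂ) ^ l * (Nat.choose (2 * p + 1) (p - l) : ℂ) *
              (f (j + 1 + l) - f (j - l)) := by
  intro Δs s q σ sinc fhat j
  have hinv : ∀ r : ℤ, ∑ k ∈ Icc (-(n : ℤ) / 2) ((n : ℤ) / 2 - 1),
      fhat k * Complex.exp (Complex.I * k * ((-π + r * Δs : ℝ) : ℂ)) = f r := by
    intro r
    -- `-n / 2` rounds down, so this window holds `n` consecutive frequencies for every `n`.
    rw [show (n : ℤ) / 2 - 1 = -(n : ℤ) / 2 + n - 1 by omega]
    exact sum_Icc_dftCoeff_mul_exp hn hper (-π) _ r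
  rw [mul_sum]
  refine (sum_congr rfl fun k _ => symbol_mul_exp_midpoint p (-π) Δs k j (fhat k)).trans ?_
  rw [← mul_sum, sum_comm]
  congr 1
  refine sum_congr rfl fun l _ => ?_
  rw [← mul_sum, sum_sub_distrib, hinv, hinv]

/-- Exact equivalence of the Fourier concentration-factor edge detector (with the
trigonometric concentration factor `σ_{2p+1}`) evaluated at cell midpoints and the
`(2p+1)`-order local differencing edge detector: `S_{n,1/2}^{σ_{2p+1}} f = T_n^p f`. -/
theorem stmt_9 (n : ℕ) (hn : 0 < n) (hne : Even n) (p : ℕ)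
    (f : ℤ → ℂ) (hper : ∀ j : ℤ, f (j + n) = f j) :
    let Δs : ℝ := 2 * π / n
    let s : ℤ → ℝ := fun j => -π + j * Δs
    let q : ℝ := Nat.choose (2 * p) p
    let σ : ℝ → ℝ := fun η => 2 ^ (2 * p) * η * Real.sin (π * η / 2) ^ (2 * p) / q
    let sinc : ℝ → ℝ := fun x => if x = 0 then 1 else Real.sin x / x
    let fhat : ℤ → ℂ := fun k =>
      (1 / (n : ℂ)) * ∑ j ∈ Finset.range n, f j * Complex.exp (-Complex.I * k * (s j : ℂ))
    ∀ j : ℤ,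
      (π : ℂ) * Complex.I *
          ∑ k ∈ Finset.Icc (-(n : ℤ) / 2) ((n : ℤ) / 2 - 1),
            (Int.sign k : ℂ) * ((σ ((|k| : ℝ) * Δs / π) : ℝ) : ℂ) *
              ((sinc ((|k| : ℝ) * Δs / 2) : ℝ) : ℂ) * fhat k *
              Complex.exp (Complex.I * k * ((s j + Δs / 2 : ℝ) : ℂ)) =
        (1 / (q : ℂ)) * ∑ l ∈ Finset.range (p + 1),
            (-1 : ℂ) ^ l * (Nat.choose (2 * p + 1) (p - l) : ℂ) *
              (f (j + 1 + l) - f (j - l)) :=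
  stmt_9_general n hn p f hper
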